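/- arXiv:1812.07020 — 5 statements merged into one kernel-verified Lean document; each statement's English description precedes it below -/
import Mathlib

section
/- Let G be an additive abelian group, S a finite subset of G, and U a nonempty finite subset of G. Then Σ_{a,b ∈ S, a ≠ b} #((a + U) ∩ (b + U)) ≤ #U · Σ_{u ∈ (U − U) \ {0}} #(S ∩ (S + u)), where U − U = {v − w : v, w ∈ U} and S + u = {a + u : a ∈ S}. -/
open Pointwise Finset

/-
Proof idea: the translates `a + U` and `b + U` can only meet when `b - a ∈ U - U`, and then
their intersection has at most `#U` elements. So the left side is at most `#U` times the number
of pairs `a ≠ b` in `S` with `b - a ∈ (U - U) \ {0}`; grouping these pairs by `u = b - a`, the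
pairs with difference `u` correspond to the elements `b ∈ S ∩ (S + u)`.
-/

section

variable {G : Type*} [AddCommGroup G] [DecidableEq G]

theorem sub_mem_sub_of_image_add_inter_nonempty {U : Finset G} {a b : G}
    (h : ((U.image (a + ·)) ∩ (U.image (b + ·))).Nonempty) : b - a ∈ U - U := by
  obtain ⟨x, hx⟩ := h
  simp only [mem_inter, mem_image] at hx
  obtain ⟨⟨v, hv, rfl⟩, ⟨w, hw, hvw⟩⟩ := hx
  exact mem_sub.mpr ⟨v, hv, w, hw, by rw [sub_eq_sub_iff_add_eq_add, add_comm v, hvw]⟩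

theorem card_image_add_inter_image_add_le (U : Finset G) {a b : G} (hab : a ≠ b) :
    ((U.image (a + ·)) ∩ (U.image (b + ·))).card ≤
      U.card * if b - a ∈ (U - U).erase 0 then 1 else 0 := by
  split_ifs with h
  · rw [mul_one]
    exact (card_le_card inter_subset_left).trans card_image_le
  · rw [mul_zero, Nat.le_zero, card_eq_zero, ← not_nonempty_iff_eq_empty]
    exact fun hne ↦ h <|
      mem_erase.mpr ⟨sub_ne_zero.mpr hab.symm, sub_mem_sub_of_image_add_inter_nonempty hne⟩

theorem card_inter_image_add_right (S : Finset G) (u : G) :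
    (S ∩ S.image (· + u)).card = ((S ×ˢ S).filter fun p ↦ p.2 - p.1 = u).card := by
  refine card_nbij' (fun b ↦ (b - u, b)) Prod.snd ?_ ?_ (fun _ _ ↦ rfl) ?_
  · intro b hb
    obtain ⟨hb, a, ha, rfl⟩ := by simpa only [mem_coe, mem_inter, mem_image] using hb
    simpa using ⟨ha, hb⟩
  · rintro ⟨a, b⟩ hp
    obtain ⟨ha, hb, rfl⟩ := by simpa only [mem_coe, mem_filter, mem_product, and_assoc] using hp
    exact mem_inter.mpr ⟨hb, mem_image.mpr ⟨a, ha, add_sub_cancel a b⟩⟩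
  · rintro ⟨a, b⟩ hp
    obtain ⟨-, -, rfl⟩ := by simpa only [mem_coe, mem_filter, mem_product, and_assoc] using hp
    simp

theorem sum_sum_ite_sub_mem (S T : Finset G) :
    ∑ a ∈ S, ∑ b ∈ S, (if b - a ∈ T then 1 else 0) = ∑ u ∈ T, (S ∩ S.image (· + u)).card := by
  calc ∑ a ∈ S, ∑ b ∈ S, (if b - a ∈ T then 1 else 0)
      = ((S ×ˢ S).filter fun p ↦ p.2 - p.1 ∈ T).card := by
        rw [card_filter, sum_product]
    _ = ∑ u ∈ T, ((S ×ˢ S).filter fun p ↦ p.2 - p.1 = u).card := by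
        rw [card_eq_sum_card_fiberwise fun p hp ↦ mem_coe.mpr (mem_filter.mp hp).2]
        refine sum_congr rfl fun u hu ↦ ?_
        rw [filter_filter]
        exact congrArg card (filter_congr fun p _ ↦ ⟨And.right, fun h ↦ ⟨h ▸ hu, h⟩⟩)
    _ = ∑ u ∈ T, (S ∩ S.image (· + u)).card := by
        simp only [card_inter_image_add_right]

end

theorem stmt1_general {G : Type*} [AddCommGroup G] [DecidableEq G]
    (S U : Finset G) :
    ∑ a ∈ S, ∑ b ∈ S.erase a, ((U.image (a + ·)) ∩ (U.image (b + ·))).card ≤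
      U.card * ∑ u ∈ (U - U).erase 0, (S ∩ (S.image (· + u))).card := by
  set T := (U - U).erase 0
  have hdiag : ∀ a, ∑ b ∈ S.erase a, (if b - a ∈ T then 1 else 0) =
      ∑ b ∈ S, (if b - a ∈ T then 1 else 0) := fun a ↦
    sum_erase S (by simp [T])
  calc ∑ a ∈ S, ∑ b ∈ S.erase a, ((U.image (a + ·)) ∩ (U.image (b + ·))).card
      ≤ ∑ a ∈ S, ∑ b ∈ S.erase a, U.card * (if b - a ∈ T then 1 else 0) :=
        sum_le_sum fun a _ ↦ sum_le_sum fun b hb ↦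
          card_image_add_inter_image_add_le U (mem_erase.mp hb).1.symm
    _ = U.card * ∑ a ∈ S, ∑ b ∈ S, (if b - a ∈ T then 1 else 0) := by
        simp only [← mul_sum, hdiag]
    _ = U.card * ∑ u ∈ T, (S ∩ S.image (· + u)).card := by
        rw [sum_sum_ite_sub_mem]

/-- **Lemma 3.2.** Let `G` be an additive abelian group, `S` a finite subset of `G` and `U` a
nonempty finite subset of `G`. Then
`∑_{a ≠ b ∈ S} #((a + U) ∩ (b + U)) ≤ #U · ∑_{0 ≠ u ∈ U − U} #(S ∩ (S + u))`,
where `U − U = {v − w : v, w ∈ U}` and `S + u = {a + u : a ∈ S}`. -/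
theorem stmt1 {G : Type*} [AddCommGroup G] [DecidableEq G]
    (S U : Finset G) (hU : U.Nonempty) :
    ∑ a ∈ S, ∑ b ∈ S.erase a, ((U.image (a + ·)) ∩ (U.image (b + ·))).card ≤
      U.card * ∑ u ∈ (U - U).erase 0, (S ∩ (S.image (· + u))).card :=
  stmt1_general S U
end

section
/- Let X ⊂ 𝔸ⁿ be an 𝔽_q-variety of dimension r and degree d < q, with irreducible 𝔽_q-components X₁, …, X_m of which X₁, …, X_σ are the essential components (absolutely irreducible of dimension r), and let U ⊆ 𝔽_qⁿ be nonempty. Then Δ = #X(𝔽_q) · #U − #(X(𝔽_q) + U) satisfies Δ ≤ #U · ( Σ_{0 ≠ u ∈ U−U} Σ_{1 ≤ i,j ≤ σ} #(X_i(𝔽_q) ∩ X_j^{(u)}(𝔽_q)) + 2(#(U−U) − 1) Σ_{σ < i ≤ m} #X_i(𝔽_q) ). -/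
open Pointwise

section Defs

variable (F : Type*) [Field F] {K : Type*} [Field K] [Algebra F K] {n : ℕ}

/-- `X` is an `F`-variety in `𝔸ⁿ(K)` (`K` the ambient algebraically closed field):
a nonempty common zero set of a family of polynomials with coefficients in `F`. -/
def IsFVar (X : Set (Fin n → K)) : Prop :=
  X.Nonempty ∧ ∃ S : Set (MvPolynomial (Fin n) F),
    X = {x | ∀ f ∈ S, MvPolynomial.aeval x f = 0}

/-- `X` is an irreducible `F`-variety: it is an `F`-variety which cannot be written as a
union of two proper `F`-subvarieties. -/
def IsIrrFVar (X : Set (Fin n → K)) : Prop :=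
  IsFVar F X ∧ ∀ Y Z : Set (Fin n → K),
    IsFVar F Y → IsFVar F Z → X = Y ∪ Z → X = Y ∨ X = Z

/-- The set `X(F)` of `F`-rational points of `X ⊆ 𝔸ⁿ(K)`, regarded as a subset of `Fⁿ`. -/
def ratPts (X : Set (Fin n → K)) : Set (Fin n → F) :=
  {a | (fun i => algebraMap F K (a i)) ∈ X}

/-- `X` shifted by `u ∈ Fⁿ`: `X⁽ᵘ⁾ = {a + u : a ∈ X}`. -/
def shiftV (u : Fin n → F) (X : Set (Fin n → K)) : Set (Fin n → K) :=
  (fun a => a + fun i => algebraMap F K (u i)) '' X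

/-- `X` contains a strictly increasing chain of length `r` of nonempty irreducible
`F`-varieties. -/
def VarDimGE (X : Set (Fin n → K)) (r : ℕ) : Prop :=
  ∃ c : Fin (r + 1) → Set (Fin n → K),
    StrictMono c ∧ ∀ i, IsIrrFVar F (c i) ∧ c i ⊆ X

/-- `X` has dimension `r`: the longest chain of nonempty irreducible `F`-varieties
contained in `X` has length `r`. -/
def HasVarDim (X : Set (Fin n → K)) (r : ℕ) : Prop :=
  VarDimGE F X r ∧ ¬ VarDimGE F X (r + 1)

/-- `L ⊆ 𝔸ⁿ(K)` is an affine-linear subspace of dimension `m`. -/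
def IsAffSub {K : Type*} [Field K] {n : ℕ} (L : Set (Fin n → K)) (m : ℕ) : Prop :=
  ∃ (W : Submodule K (Fin n → K)) (b : Fin n → K),
    Module.finrank K ↥W = m ∧ L = (fun w => b + w) '' (W : Set (Fin n → K))

/-- Degree of an (irreducible) variety `X` of dimension `r`: the maximal number of points
lying in an intersection `X ∩ L` with a linear space `L` of codimension `r` for which
`X ∩ L` is finite. -/
def HasIrrDeg (X : Set (Fin n → K)) (d : ℕ) : Prop :=
  ∃ r, HasVarDim F X r ∧
    (∃ L : Set (Fin n → K), IsAffSub L (n - r) ∧ (X ∩ L).Finite ∧ (X ∩ L).ncard = d) ∧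
    ∀ L : Set (Fin n → K), IsAffSub L (n - r) → (X ∩ L).Finite → (X ∩ L).ncard ≤ d

/-- Degree of an `F`-variety: the sum of the degrees of the irreducible `F`-components in a
non-redundant decomposition. -/
def HasVarDeg (X : Set (Fin n → K)) (d : ℕ) : Prop :=
  ∃ (m : ℕ) (Xc : Fin m → Set (Fin n → K)) (dc : Fin m → ℕ),
    X = ⋃ i, Xc i ∧ (∀ i, IsIrrFVar F (Xc i)) ∧
    (∀ i j, i ≠ j → ¬ Xc i ⊆ Xc j) ∧
    (∀ i, HasIrrDeg F (Xc i) (dc i)) ∧ d = ∑ i, dc i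

end Defs


/-!
Every point of `A + U` has at least one representation `a + u` with `(a, u) ∈ A × U`, so
`Δ = #A·#U − #(A + U)` is at most the number of ordered pairs of distinct representations
of a common point. Such a pair `a + u = a' + u'` is determined by `(a, u)` and `v = u' − u ≠ 0`,
and then `a = a' + v ∈ A ∩ (A + v)`; hence `Δ ≤ #U · ∑_{0 ≠ v ∈ U − U} #(A ∩ (A + v))`.
Finally, writing `A` as the union of the `Aᵢ = Xᵢ(𝔽_q)`, a point of `A ∩ (A + v)` lies in some
`Aᵢ ∩ (Aⱼ + v)` with `i, j` essential, or in `Aᵢ` or `Aᵢ + v` with `i` non-essential.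
-/

namespace Finset

theorem card_le_card_image_add_card_collisions {α β : Type*} [DecidableEq α] [DecidableEq β]
    (f : α → β) (s : Finset α) :
    #s ≤ #(s.image f) + #(s.offDiag.filter fun p => f p.1 = f p.2) := by
  have hfiber : ∀ b ∈ s.image f,
      #((s.offDiag.filter fun p => f p.1 = f p.2).filter fun p => f p.1 = b) =
        #(s.filter fun a => f a = b).offDiag := by
    intro b _
    congr 1
    ext ⟨x, y⟩
    simp only [mem_filter, mem_offDiag]
    constructor
    · rintro ⟨⟨⟨hx, hy, hxy⟩, hf⟩, rfl⟩
      exact ⟨⟨hx, rfl⟩, ⟨hy, hf.symm⟩, hxy⟩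
    · rintro ⟨⟨hx, rfl⟩, ⟨hy, hf⟩, hxy⟩
      exact ⟨⟨⟨hx, hy, hxy⟩, hf.symm⟩, rfl⟩
  have hmaps : ∀ p ∈ s.offDiag.filter (fun p => f p.1 = f p.2), f p.1 ∈ s.image f :=
    fun p hp => mem_image_of_mem f (mem_offDiag.mp (mem_filter.mp hp).1).1
  calc #s = ∑ b ∈ s.image f, #(s.filter fun a => f a = b) := card_eq_sum_card_image f s
    _ ≤ ∑ b ∈ s.image f, (1 + #(s.filter fun a => f a = b).offDiag) := by
      gcongr with b
      rw [offDiag_card]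
      set k := #(s.filter fun a => f a = b)
      rcases Nat.eq_zero_or_pos k with h | h
      · omega
      · have hk : k - 1 ≤ (k - 1) * k := Nat.le_mul_of_pos_right (k - 1) h
        rw [Nat.sub_one_mul] at hk
        omega
    _ = #(s.image f) + #(s.offDiag.filter fun p => f p.1 = f p.2) := by
      rw [sum_add_distrib, card_eq_sum_card_fiberwise hmaps, sum_const, smul_eq_mul, mul_one]
      exact congrArg _ (sum_congr rfl hfiber).symm

variable {V : Type*} [AddCommGroup V] [DecidableEq V]

theorem card_mul_card_le_card_add_add_sum_inter (A U : Finset V) :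
    #A * #U ≤ #(A + U) + ∑ v ∈ (U - U).erase 0, #(A ∩ A.image (· + v)) * #U := by
  have hinj : Set.InjOn (fun p : (V × V) × (V × V) => (⟨p.2.2 - p.1.2, p.1⟩ : Σ _ : V, V × V))
      ((A ×ˢ U).offDiag.filter fun p => p.1.1 + p.1.2 = p.2.1 + p.2.2) := by
    rintro ⟨⟨a, u⟩, ⟨a', u'⟩⟩ hp ⟨⟨b, w⟩, ⟨b', w'⟩⟩ hq h
    rw [mem_coe, mem_filter] at hp hq
    simp only [Sigma.mk.inj_iff, Prod.mk.injEq, heq_eq_eq] at h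
    obtain ⟨hv, rfl, rfl⟩ := h
    obtain rfl : u' = w' := by simpa using hv
    obtain rfl : a' = b' := add_right_cancel (hp.2.symm.trans hq.2)
    rfl
  have hmaps : ∀ p ∈ (A ×ˢ U).offDiag.filter (fun p => p.1.1 + p.1.2 = p.2.1 + p.2.2),
      (⟨p.2.2 - p.1.2, p.1⟩ : Σ _ : V, V × V) ∈
        ((U - U).erase 0).sigma fun v => (A ∩ A.image (· + v)) ×ˢ U := by
    rintro ⟨⟨a, u⟩, ⟨a', u'⟩⟩ hp
    simp only [mem_filter, mem_offDiag, mem_product] at hp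
    obtain ⟨⟨⟨ha, hu⟩, ⟨ha', hu'⟩, hne⟩, heq⟩ := hp
    refine mem_sigma.mpr ⟨mem_erase.mpr ⟨?_, sub_mem_sub hu' hu⟩,
      mem_product.mpr ⟨mem_inter.mpr ⟨ha, mem_image.mpr ⟨a', ha', ?_⟩⟩, hu⟩⟩
    · rintro h
      obtain rfl : u' = u := sub_eq_zero.mp h
      exact hne (by rw [add_right_cancel heq])
    · rw [add_sub, ← heq, add_sub_cancel_right]
  calc #A * #U = #(A ×ˢ U) := (card_product A U).symm
    _ ≤ #(A + U) + #((A ×ˢ U).offDiag.filter fun p => p.1.1 + p.1.2 = p.2.1 + p.2.2) := by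
      rw [← image_add_product]
      exact card_le_card_image_add_card_collisions _ _
    _ ≤ #(A + U) + ∑ v ∈ (U - U).erase 0, #(A ∩ A.image (· + v)) * #U := by
      gcongr
      refine (card_le_card_of_injOn _ hmaps hinj).trans_eq ?_
      rw [card_sigma]
      simp_rw [card_product]

theorem card_union_inter_image_add_le (B C : Finset V) (v : V) :
    #((B ∪ C) ∩ (B ∪ C).image (· + v)) ≤ #(B ∩ B.image (· + v)) + 2 * #C := by
  have hsub : (B ∪ C) ∩ (B ∪ C).image (· + v) ⊆ B ∩ B.image (· + v) ∪ (C ∪ C.image (· + v)) := by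
    rw [image_union]
    intro x
    simp only [mem_inter, mem_union]
    tauto
  calc #((B ∪ C) ∩ (B ∪ C).image (· + v))
      ≤ #(B ∩ B.image (· + v)) + (#C + #(C.image (· + v))) :=
        (card_le_card hsub).trans ((card_union_le _ _).trans (by gcongr; exact card_union_le _ _))
    _ = #(B ∩ B.image (· + v)) + 2 * #C := by
      rw [card_image_of_injective C (add_left_injective v)]
      ring

theorem card_biUnion_inter_image_add_le {ι : Type*} (s : Finset ι) (A : ι → Finset V) (v : V) :
    #(s.biUnion A ∩ (s.biUnion A).image (· + v)) ≤
      ∑ i ∈ s, ∑ j ∈ s, #(A i ∩ (A j).image (· + v)) := by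
  rw [biUnion_image, biUnion_inter]
  refine card_biUnion_le.trans (sum_le_sum fun i _ => ?_)
  rw [inter_biUnion]
  exact card_biUnion_le

theorem card_biUnion_univ_inter_image_add_le {ι : Type*} [Fintype ι] [DecidableEq ι]
    (A : ι → Finset V) (s : Finset ι) (v : V) :
    #(univ.biUnion A ∩ (univ.biUnion A).image (· + v)) ≤
      ∑ i ∈ s, ∑ j ∈ s, #(A i ∩ (A j).image (· + v)) + 2 * ∑ i ∈ sᶜ, #(A i) := by
  rw [← union_compl s, union_biUnion]
  calc _ ≤ #(s.biUnion A ∩ (s.biUnion A).image (· + v)) + 2 * #(sᶜ.biUnion A) :=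
        card_union_inter_image_add_le _ _ v
    _ ≤ _ := by
      gcongr
      · exact card_biUnion_inter_image_add_le s A v
      · exact card_biUnion_le

theorem card_biUnion_mul_card_sub_card_add_le {ι : Type*} [Fintype ι] [DecidableEq ι]
    (A : ι → Finset V) (s : Finset ι) {U : Finset V} (hU : U.Nonempty) :
    (#(univ.biUnion A) * #U : ℤ) - #(univ.biUnion A + U) ≤
      #U * (∑ v ∈ (U - U).erase 0, ∑ i ∈ s, ∑ j ∈ s, (#(A i ∩ (A j).image (· + v)) : ℤ) +
        2 * (#(U - U) - 1) * ∑ i ∈ sᶜ, (#(A i) : ℤ)) := by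
  obtain ⟨u, hu⟩ := hU
  have hzero : (0 : V) ∈ U - U := by simpa using sub_mem_sub hu hu
  have hcard : (#((U - U).erase 0) : ℤ) = #(U - U) - 1 := by
    rw [card_erase_of_mem hzero, Nat.cast_pred (card_pos.mpr ⟨0, hzero⟩)]
  have hsplit := card_biUnion_univ_inter_image_add_le A s
  calc (#(univ.biUnion A) * #U : ℤ) - #(univ.biUnion A + U)
      ≤ ∑ v ∈ (U - U).erase 0, (#(univ.biUnion A ∩ (univ.biUnion A).image (· + v)) : ℤ) * #U := by
        have := card_mul_card_le_card_add_add_sum_inter (univ.biUnion A) U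
        push_cast [← Nat.cast_le (α := ℤ)] at this
        linarith
    _ ≤ ∑ v ∈ (U - U).erase 0, (∑ i ∈ s, ∑ j ∈ s, (#(A i ∩ (A j).image (· + v)) : ℤ) +
          2 * ∑ i ∈ sᶜ, (#(A i) : ℤ)) * #U := by
        gcongr with v
        exact_mod_cast hsplit v
    _ = _ := by
      rw [← sum_mul, sum_add_distrib, sum_const, nsmul_eq_mul, hcard]
      ring

end Finset

open Finset

theorem ratPts_shiftV {F K : Type*} [Field F] [Field K] [Algebra F K] {n : ℕ}
    (u : Fin n → F) (Y : Set (Fin n → K)) :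
    ratPts F (shiftV F u Y) = (· + u) '' ratPts F Y := by
  ext a
  simp only [ratPts, shiftV, Set.mem_image, Set.mem_ofPred_eq]
  constructor
  · rintro ⟨x, hx, hxa⟩
    refine ⟨a - u, ?_, sub_add_cancel a u⟩
    convert hx using 1
    funext i
    simp [← congrFun hxa i]
  · rintro ⟨b, hb, rfl⟩
    exact ⟨_, hb, funext fun i => (map_add _ _ _).symm⟩

theorem stmt2_general {F : Type*} [Field F] [Finite F] {n m σ : ℕ}
    (X : Set (Fin n → AlgebraicClosure F))
    (Xc : Fin m → Set (Fin n → AlgebraicClosure F))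
    (hdecomp : X = ⋃ i, Xc i)
    (U : Set (Fin n → F)) (hU : U.Nonempty) :
    ((ratPts F X).ncard * U.ncard : ℤ) - ((ratPts F X + U).ncard : ℤ) ≤
      (U.ncard : ℤ) *
        ((∑ u ∈ (Set.toFinite ((U - U) \ {0})).toFinset,
            ∑ i ∈ Finset.univ.filter (fun i : Fin m => (i : ℕ) < σ),
              ∑ j ∈ Finset.univ.filter (fun j : Fin m => (j : ℕ) < σ),
                ((ratPts F (Xc i) ∩ ratPts F (shiftV F u (Xc j))).ncard : ℤ))
          + 2 * ((U - U).ncard - 1) *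
              ∑ i ∈ Finset.univ.filter (fun i : Fin m => σ ≤ (i : ℕ)),
                ((ratPts F (Xc i)).ncard : ℤ)) := by
  classical
  have := Fintype.ofFinite F
  set A : Fin m → Finset (Fin n → F) := fun i => (ratPts F (Xc i)).toFinset
  have hA : ∀ i, ratPts F (Xc i) = A i := fun i => (Set.coe_toFinset _).symm
  have hX : ratPts F X = ↑(univ.biUnion A) := by
    ext a
    simp [← hA, hdecomp, ratPts]
  have hcompl : univ.filter (fun i : Fin m => σ ≤ (i : ℕ)) =
      (univ.filter (fun i : Fin m => (i : ℕ) < σ))ᶜ := by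
    ext i
    simp
  lift U to Finset (Fin n → F) using U.toFinite
  have hdiff :
      (Set.toFinite ((↑U - ↑U : Set (Fin n → F)) \ {0})).toFinset = (U - U).erase 0 := by
    ext v
    simp [← coe_sub, and_comm]
  rw [hdiff, hX, hcompl, ← coe_add, ← coe_sub]
  simp only [ratPts_shiftV, hA, ← coe_image, ← coe_inter, Set.ncard_coe_finset]
  exact card_biUnion_mul_card_sub_card_add_le A _ (by simpa using hU)

/-- **Theorem 3.3 (i).** Let `X ⊂ 𝔸ⁿ` be an `𝔽_q`-variety of dimension `r` and degree
`d < q`, with irreducible `𝔽_q`-components `X₁, …, X_m` of which the first `σ` are the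
essential ones (absolutely irreducible of dimension `r`), and let `U ⊆ 𝔽_qⁿ` be nonempty.
Then `Δ = #X(𝔽_q)·#U − #(X(𝔽_q)+U)` is at most
`#U · (∑_{0≠u∈U−U} ∑_{i,j≤σ} #(Xᵢ(𝔽_q) ∩ Xⱼ⁽ᵘ⁾(𝔽_q)) + 2(#(U−U)−1)·∑_{σ<i≤m} #Xᵢ(𝔽_q))`. -/
theorem stmt2 {F : Type*} [Field F] [Finite F] {n m σ r d q : ℕ}
    (hq : q = Nat.card F)
    (X : Set (Fin n → AlgebraicClosure F))
    (Xc : Fin m → Set (Fin n → AlgebraicClosure F))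
    (dc : Fin m → ℕ)
    (hXvar : IsFVar F X)
    (hdecomp : X = ⋃ i, Xc i)
    (hirr : ∀ i, IsIrrFVar F (Xc i))
    (hnonred : ∀ i j, i ≠ j → ¬ Xc i ⊆ Xc j)
    (hdeg : ∀ i, HasIrrDeg F (Xc i) (dc i))
    (hd : d = ∑ i, dc i) (hdq : d < q)
    (hdim : HasVarDim F X r)
    (hσ : σ ≤ m)
    (hess : ∀ i : Fin m, (i : ℕ) < σ →
      IsIrrFVar (AlgebraicClosure F) (Xc i) ∧ HasVarDim F (Xc i) r)
    (hness : ∀ i : Fin m, σ ≤ (i : ℕ) →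
      ¬ (IsIrrFVar (AlgebraicClosure F) (Xc i) ∧ HasVarDim F (Xc i) r))
    (U : Set (Fin n → F)) (hU : U.Nonempty) :
    ((ratPts F X).ncard * U.ncard : ℤ) - ((ratPts F X + U).ncard : ℤ) ≤
      (U.ncard : ℤ) *
        ((∑ u ∈ (Set.toFinite ((U - U) \ {0})).toFinset,
            ∑ i ∈ Finset.univ.filter (fun i : Fin m => (i : ℕ) < σ),
              ∑ j ∈ Finset.univ.filter (fun j : Fin m => (j : ℕ) < σ),
                ((ratPts F (Xc i) ∩ ratPts F (shiftV F u (Xc j))).ncard : ℤ))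
          + 2 * ((U - U).ncard - 1) *
              ∑ i ∈ Finset.univ.filter (fun i : Fin m => σ ≤ (i : ℕ)),
                ((ratPts F (Xc i)).ncard : ℤ)) :=
  stmt2_general X Xc hdecomp U hU
end

section
/- Let p be an odd prime, d, n, h positive integers with n ≥ 2, h ≥ 1 and p > d + 2h, and let f = x₁·(x₁ − 1)⋯(x₁ − (d−1)) ∈ 𝔽_p[x₁,…,x_n], with X = {f = 0} ⊆ 𝔸ⁿ. Then #X(𝔽_p) = d·p^{n−1}, #(X(𝔽_p) + U_h) = (d + 2h)·p^{n−1}, and Δ = #X(𝔽_p)·#U_h − #(X(𝔽_p) + U_h) = p^{n−1}·(d·(2h+1)ⁿ − (d + 2h)). -/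
open Pointwise

lemma countOne {ι α : Type*} [Fintype ι] [DecidableEq ι] [Fintype α] [DecidableEq α]
    (idx : ι) (T : Finset α) :
    {a : ι → α | a idx ∈ T}.ncard = T.card * (Fintype.card α) ^ (Fintype.card ι - 1) := by
  have hset : {a : ι → α | a idx ∈ T} =
      ↑(Fintype.piFinset fun i => if i = idx then T else Finset.univ) := by
    ext a
    simp only [Set.mem_setOf_eq, Finset.mem_coe, Fintype.mem_piFinset]
    constructor
    · intro hA i; by_cases hi : i = idx <;> simp [hi, hA]
    · intro hA; have := hA idx; simpa using this
  rw [hset, Set.ncard_coe_finset, Fintype.card_piFinset,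
    ← Finset.mul_prod_erase Finset.univ _ (Finset.mem_univ idx), if_pos rfl]
  have hc : ∀ i ∈ Finset.univ.erase idx,
      (if i = idx then T else (Finset.univ : Finset α)).card = Fintype.card α := by
    intro i hi; rw [if_neg (Finset.ne_of_mem_erase hi), Finset.card_univ]
  rw [Finset.prod_congr rfl hc, Finset.prod_const,
    Finset.card_erase_of_mem (Finset.mem_univ idx), Finset.card_univ]

lemma countAll {ι α : Type*} [Fintype ι] [DecidableEq ι] [Fintype α] [DecidableEq α]
    (V : Finset α) :
    {a : ι → α | ∀ i, a i ∈ V}.ncard = V.card ^ (Fintype.card ι) := by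
  have hset : {a : ι → α | ∀ i, a i ∈ V} = ↑(Fintype.piFinset fun _ : ι => V) := by
    ext a; simp [Fintype.mem_piFinset]
  rw [hset, Set.ncard_coe_finset, Fintype.card_piFinset, Finset.prod_const, Finset.card_univ]

lemma intCastInj {p : ℕ} [NeZero p] {k l : ℤ} (hkl : |k - l| < p)
    (he : (k : ZMod p) = (l : ZMod p)) : k = l := by
  have h0 : ((k - l : ℤ) : ZMod p) = 0 := by push_cast; rw [he]; ring
  rw [ZMod.intCast_zmod_eq_zero_iff_dvd] at h0
  have := Int.eq_zero_of_abs_lt_dvd h0 hkl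
  omega

lemma valMinAbsCast {p : ℕ} [NeZero p] {k : ℤ} (h1 : -(p : ℤ) < k * 2) (h2 : k * 2 ≤ p) :
    ((k : ZMod p)).valMinAbs = k := by
  rw [ZMod.valMinAbs_spec]
  exact ⟨rfl, h1, h2⟩

/-- **Example 3.5.** Let `p` be an odd prime, `d, n, h` positive integers with `n ≥ 2`,
`h ≥ 1` and `p > d + 2h`, and let `f = x₁(x₁−1)⋯(x₁−(d−1)) ∈ 𝔽_p[x₁,…,x_n]`, with
`X = {f = 0} ⊆ 𝔸ⁿ`. Then `#X(𝔽_p) = d·p^{n−1}`, `#(X(𝔽_p)+U_h) = (d+2h)·p^{n−1}`, and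
`Δ = #X(𝔽_p)·#U_h − #(X(𝔽_p)+U_h) = p^{n−1}·(d·(2h+1)ⁿ − (d+2h))`,
where `U_h = {a ∈ 𝔽_pⁿ : ‖a‖_∞ ≤ h}` for `𝔽_p = {−(p−1)/2, …, (p−1)/2}`. -/
theorem stmt11 (p : ℕ) [Fact p.Prime] (hodd : Odd p) {d n h : ℕ}
    (hd : 0 < d) (hn : 2 ≤ n) (hh : 1 ≤ h) (hph : d + 2 * h < p)
    (f : MvPolynomial (Fin n) (ZMod p))
    (hf : f = ∏ i ∈ Finset.range d,
      (MvPolynomial.X ⟨0, by omega⟩ - MvPolynomial.C (i : ZMod p)))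
    (X : Set (Fin n → AlgebraicClosure (ZMod p)))
    (hX : X = {x | MvPolynomial.aeval x f = 0})
    (Xp : Set (Fin n → ZMod p))
    (hXp : Xp = {a | (fun i => algebraMap (ZMod p) (AlgebraicClosure (ZMod p)) (a i)) ∈ X})
    (U : Set (Fin n → ZMod p))
    (hU : U = {a | ∀ i, |(a i).valMinAbs| ≤ (h : ℤ)}) :
    Xp.ncard = d * p ^ (n - 1) ∧
    (Xp + U).ncard = (d + 2 * h) * p ^ (n - 1) ∧
    (Xp.ncard * U.ncard : ℤ) - ((Xp + U).ncard : ℤ) =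
      (p : ℤ) ^ (n - 1) * (d * (2 * h + 1) ^ n - (d + 2 * h)) := by
  have hp : p.Prime := Fact.out
  set idx : Fin n := ⟨0, by omega⟩ with hidx
  set S : Finset (ZMod p) := (Finset.range d).image (Nat.cast) with hS
  set V : Finset (ZMod p) := (Finset.Icc (-(h : ℤ)) (h : ℤ)).image (Int.cast) with hV
  set T : Finset (ZMod p) := (Finset.Icc (-(h : ℤ)) ((d : ℤ) - 1 + h)).image (Int.cast) with hT
  have hvma : ∀ k : ℤ, -((h : ℤ)) ≤ k → k ≤ (h : ℤ) → ((k : ZMod p)).valMinAbs = k := by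
    intro k hk1 hk2
    refine valMinAbsCast ?_ ?_ <;> omega
  -- cardinalities of the finsets
  have hScard : S.card = d := by
    rw [hS, Finset.card_image_of_injOn, Finset.card_range]
    intro i hi j hj hij
    simp only [Finset.coe_range, Set.mem_Iio] at hi hj
    have he : ((i : ℤ) : ZMod p) = ((j : ℤ) : ZMod p) := by push_cast; exact_mod_cast hij
    have := intCastInj (p := p) (k := i) (l := j) (by rw [abs_lt]; omega) he
    omega
  have hVcard : V.card = 2 * h + 1 := by
    rw [hV, Finset.card_image_of_injOn]
    · rw [Int.card_Icc]; omega
    intro i hi j hj hij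
    simp only [Finset.coe_Icc, Set.mem_Icc] at hi hj
    exact intCastInj (by rw [abs_lt]; omega) hij
  have hTcard : T.card = d + 2 * h := by
    rw [hT, Finset.card_image_of_injOn]
    · rw [Int.card_Icc]; omega
    intro i hi j hj hij
    simp only [Finset.coe_Icc, Set.mem_Icc] at hi hj
    exact intCastInj (by rw [abs_lt]; omega) hij
  -- membership characterizations
  have hSmem : ∀ x : ZMod p, x ∈ S ↔ ∃ i : ℕ, i < d ∧ (i : ZMod p) = x := by
    intro x
    rw [hS, Finset.mem_image]
    constructor
    · rintro ⟨i, hi, rfl⟩; exact ⟨i, Finset.mem_range.mp hi, rfl⟩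
    · rintro ⟨i, hi, rfl⟩; exact ⟨i, Finset.mem_range.mpr hi, rfl⟩
  have hVmem : ∀ x : ZMod p, x ∈ V ↔ |x.valMinAbs| ≤ (h : ℤ) := by
    intro x
    rw [hV, Finset.mem_image]
    constructor
    · rintro ⟨k, hk, rfl⟩
      rw [Finset.mem_Icc] at hk
      rw [hvma k (by omega) (by omega), abs_le]
      omega
    · intro hx
      exact ⟨x.valMinAbs, Finset.mem_Icc.mpr (abs_le.mp hx), ZMod.coe_valMinAbs x⟩
  have hTmem : ∀ x : ZMod p, x ∈ T ↔
      ∃ k : ℤ, -((h : ℤ)) ≤ k ∧ k ≤ (d : ℤ) - 1 + h ∧ (k : ZMod p) = x := by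
    intro x
    rw [hT, Finset.mem_image]
    constructor
    · rintro ⟨k, hk, rfl⟩; rw [Finset.mem_Icc] at hk; exact ⟨k, hk.1, hk.2, rfl⟩
    · rintro ⟨k, h1, h2, rfl⟩; exact ⟨k, Finset.mem_Icc.mpr ⟨h1, h2⟩, rfl⟩
  -- characterize Xp
  have hXpEq : Xp = {a : Fin n → ZMod p | a idx ∈ S} := by
    rw [hXp, hX, hf]
    ext a
    simp only [Set.mem_setOf_eq, map_prod, map_sub, MvPolynomial.aeval_X, MvPolynomial.aeval_C,
      Finset.prod_eq_zero_iff, Finset.mem_range, hSmem]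
    constructor
    · rintro ⟨i, hi, hz⟩
      rw [sub_eq_zero] at hz
      exact ⟨i, hi, ((algebraMap (ZMod p) (AlgebraicClosure (ZMod p))).injective hz).symm⟩
    · rintro ⟨i, hi, he⟩
      exact ⟨i, hi, by rw [← he]; push_cast; ring⟩
  -- characterize U
  have hUEq : U = {a : Fin n → ZMod p | ∀ i, a i ∈ V} := by
    rw [hU]
    ext a
    simp only [Set.mem_setOf_eq]
    exact forall_congr' fun i => (hVmem (a i)).symm
  -- characterize Xp + U
  have hAddEq : Xp + U = {b : Fin n → ZMod p | b idx ∈ T} := by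
    ext b
    rw [Set.mem_add]
    simp only [hXpEq, hUEq, Set.mem_setOf_eq, hTmem]
    constructor
    · rintro ⟨a, ha, u, hu, rfl⟩
      obtain ⟨i, hi, hai⟩ := (hSmem _).mp ha
      have hv := abs_le.mp ((hVmem _).mp (hu idx))
      refine ⟨(i : ℤ) + (u idx).valMinAbs, by omega, by omega, ?_⟩
      simp only [Pi.add_apply]
      push_cast
      rw [hai]
    · rintro ⟨k, hk1, hk2, he⟩
      have hex : ∃ i : ℤ, 0 ≤ i ∧ i ≤ (d : ℤ) - 1 ∧ -((h : ℤ)) ≤ k - i ∧ k - i ≤ h := by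
        rcases le_or_gt k 0 with hk | hk
        · exact ⟨0, by omega, by omega, by omega, by omega⟩
        rcases le_or_gt k ((d : ℤ) - 1) with hk' | hk'
        · exact ⟨k, by omega, by omega, by omega, by omega⟩
        · exact ⟨(d : ℤ) - 1, by omega, by omega, by omega, by omega⟩
      obtain ⟨i, hi0, hid, hv1, hv2⟩ := hex
      refine ⟨fun j => if j = idx then (i : ZMod p) else b j, ?_,
        fun j => if j = idx then ((k - i : ℤ) : ZMod p) else 0, ?_, ?_⟩
      · show (if idx = idx then (i : ZMod p) else b idx) ∈ S
        rw [if_pos rfl, hSmem]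
        refine ⟨i.toNat, by omega, ?_⟩
        have h1 : ((i.toNat : ℤ) : ZMod p) = ((i : ℤ) : ZMod p) := by
          rw [Int.toNat_of_nonneg hi0]
        rwa [Int.cast_natCast] at h1
      · intro j
        show (if j = idx then ((k - i : ℤ) : ZMod p) else 0) ∈ V
        by_cases hj : j = idx
        · rw [if_pos hj, hVmem, hvma (k - i) (by omega) (by omega), abs_le]
          omega
        · rw [if_neg hj, hVmem]
          simp
      · funext j
        show (if j = idx then (i : ZMod p) else b j) +
            (if j = idx then ((k - i : ℤ) : ZMod p) else 0) = b j
        by_cases hj : j = idx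
        · rw [if_pos hj, if_pos hj, hj, ← he]
          push_cast; ring
        · rw [if_neg hj, if_neg hj, add_zero]
  -- counting
  have hn1 : Fintype.card (Fin n) = n := Fintype.card_fin n
  have hcardZ : Fintype.card (ZMod p) = p := ZMod.card p
  have hXpcard : Xp.ncard = d * p ^ (n - 1) := by
    rw [hXpEq, countOne idx S, hScard, hcardZ, hn1]
  have hUcard : U.ncard = (2 * h + 1) ^ n := by
    rw [hUEq, countAll V, hVcard, hn1]
  have hAddcard : (Xp + U).ncard = (d + 2 * h) * p ^ (n - 1) := by
    rw [hAddEq, countOne idx T, hTcard, hcardZ, hn1]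
  refine ⟨hXpcard, hAddcard, ?_⟩
  rw [hXpcard, hUcard, hAddcard]
  have hpow : (p : ℤ) ^ n = (p : ℤ) ^ (n - 1) * p := by
    rw [← pow_succ]; congr 1; omega
  push_cast
  ring
end

section
/- For positive integers m, n and s < min{m, n}, let M_s ⊆ 𝔸^{m×n} be the variety of m×n matrices of rank at most s over the algebraic closure of 𝔽_q. Then for every nonzero matrix u ∈ 𝔽_q^{m×n}, M_s ≠ M_s^{(u)} = {A + u : A ∈ M_s}; that is, M_s is 𝔽_q^{m×n}-shift-free. Equivalently, for every nonzero u ∈ 𝔽_q^{m×n} there exists a matrix A with rank A ≤ s and rank(A + u) > s. -/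
open Matrix Module

section Aux

variable {K : Type*} [Field K] {m n : ℕ}

private lemma rank_add_le' (X Y : Matrix (Fin m) (Fin n) K) :
    (X + Y).rank ≤ X.rank + Y.rank := by
  have hle : LinearMap.range (X + Y).mulVecLin ≤
      LinearMap.range X.mulVecLin ⊔ LinearMap.range Y.mulVecLin := by
    rintro w ⟨v, rfl⟩
    rw [mulVecLin_add]
    exact Submodule.add_mem_sup ⟨v, rfl⟩ ⟨v, rfl⟩
  have h1 := Submodule.finrank_sup_add_finrank_inf_eq
    (LinearMap.range X.mulVecLin) (LinearMap.range Y.mulVecLin)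
  have h2 := Submodule.finrank_mono (R := K) hle
  unfold Matrix.rank
  omega

private lemma rank_pos_of_ne_zero {u : Matrix (Fin m) (Fin n) K} (hu : u ≠ 0) :
    1 ≤ u.rank := by
  rcases Nat.eq_zero_or_pos u.rank with h | h
  · exfalso
    apply hu
    have hbot : LinearMap.range u.mulVecLin = ⊥ :=
      Submodule.finrank_eq_zero.mp h
    ext i j
    have : u.mulVec (Pi.single j 1) = 0 := by
      have : u.mulVecLin (Pi.single j 1) ∈ (⊥ : Submodule K (Fin m → K)) := by
        rw [← hbot]; exact ⟨_, rfl⟩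
      simpa using this
    have := congrFun this i
    simpa [Matrix.mulVec_single] using this
  · exact h

/-- Key step: a matrix of non-maximal rank can be augmented by a rank-one matrix
increasing the rank. -/
private lemma exists_rank_one_increment (B : Matrix (Fin m) (Fin n) K)
    (h : B.rank < min m n) :
    ∃ C : Matrix (Fin m) (Fin n) K, C.rank ≤ 1 ∧ B.rank + 1 ≤ (B + C).rank := by
  have hrn : B.rank < n := lt_of_lt_of_le h (min_le_right _ _)
  have hrm : B.rank < m := lt_of_lt_of_le h (min_le_left _ _)
  -- find a nonzero kernel vector x
  have hker : LinearMap.ker B.mulVecLin ≠ ⊥ := by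
    intro hk
    have := LinearMap.finrank_range_add_finrank_ker B.mulVecLin
    rw [hk, finrank_bot, finrank_fin_fun] at this
    unfold Matrix.rank at hrn
    omega
  obtain ⟨x, hxker, hxne⟩ := Submodule.ne_bot_iff _ |>.mp hker
  -- find y outside the range
  have hrng : LinearMap.range B.mulVecLin ≠ ⊤ := by
    intro hr
    have : B.rank = finrank K (Fin m → K) := by
      unfold Matrix.rank; rw [hr, finrank_top]
    rw [finrank_fin_fun] at this
    omega
  obtain ⟨y, hy⟩ : ∃ y, y ∉ LinearMap.range B.mulVecLin := by
    by_contra hc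
    push_neg at hc
    exact hrng (Submodule.eq_top_iff'.mpr hc)
  have hyne : y ≠ 0 := by
    rintro rfl; exact hy (Submodule.zero_mem _)
  obtain ⟨j0, hj0⟩ : ∃ j0, x j0 ≠ 0 := Function.ne_iff.mp hxne
  -- the rank one matrix C
  set C : Matrix (Fin m) (Fin n) K :=
    Matrix.of fun i j => if j = j0 then (x j0)⁻¹ * y i else 0 with hC
  have hCmul : ∀ v : Fin n → K, C.mulVec v = ((x j0)⁻¹ * v j0) • y := by
    intro v
    funext i
    simp only [Matrix.mulVec, dotProduct, hC, Matrix.of_apply, ite_mul, zero_mul,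
      Finset.sum_ite_eq', Finset.mem_univ, if_true, Pi.smul_apply, smul_eq_mul]
    ring
  -- C has rank at most one
  have hCrank : C.rank ≤ 1 := by
    have hle : LinearMap.range C.mulVecLin ≤ Submodule.span K {y} := by
      rintro w ⟨v, rfl⟩
      rw [mulVecLin_apply, hCmul]
      exact Submodule.smul_mem _ _ (Submodule.mem_span_singleton_self y)
    calc C.rank ≤ finrank K (Submodule.span K {y}) := Submodule.finrank_mono hle
      _ = 1 := finrank_span_singleton hyne
  refine ⟨C, hCrank, ?_⟩
  -- y is in the range of B + C
  have hymem : y ∈ LinearMap.range (B + C).mulVecLin := by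
    refine ⟨x, ?_⟩
    rw [mulVecLin_apply, Matrix.add_mulVec, hCmul]
    have hx0 : B.mulVec x = 0 := hxker
    rw [hx0, inv_mul_cancel₀ hj0, one_smul, zero_add]
  -- range B < range (B + C)
  have hlt : LinearMap.range B.mulVecLin < LinearMap.range (B + C).mulVecLin := by
    rw [SetLike.lt_iff_le_and_exists]
    constructor
    · rintro w ⟨v, rfl⟩
      have : B.mulVec v = (B + C).mulVec v - C.mulVec v := by
        rw [Matrix.add_mulVec]; abel
      rw [mulVecLin_apply, this, hCmul]
      exact Submodule.sub_mem _ ⟨v, rfl⟩ (Submodule.smul_mem _ _ hymem)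
    · exact ⟨y, hymem, hy⟩
  exact Submodule.finrank_lt_finrank_of_lt hlt

/-- The induction: one can add a matrix of rank at most `k` to increase the rank by `k`
(capped at `min m n`). -/
private lemma exists_rank_increase (u : Matrix (Fin m) (Fin n) K) (k : ℕ) :
    ∃ A : Matrix (Fin m) (Fin n) K, A.rank ≤ k ∧
      min (u.rank + k) (min m n) ≤ (A + u).rank := by
  induction k with
  | zero =>
      refine ⟨0, by simp, ?_⟩
      simpa using min_le_left (u.rank) (min m n)
  | succ k ih =>
      obtain ⟨A, hA, hAu⟩ := ih
      by_cases h : (A + u).rank < min m n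
      · obtain ⟨C, hC, hBC⟩ := exists_rank_one_increment (A + u) h
        refine ⟨A + C, ?_, ?_⟩
        · have := rank_add_le' A C
          omega
        · have hre : A + C + u = A + u + C := by abel
          rw [hre]
          omega
      · exact ⟨A, le_trans hA (Nat.le_succ k), by omega⟩

/-- Main construction over an arbitrary field. -/
private lemma exists_shift_witness {s : ℕ} (hs : s < min m n)
    (u : Matrix (Fin m) (Fin n) K) (hu : u ≠ 0) :
    ∃ A : Matrix (Fin m) (Fin n) K, A.rank ≤ s ∧ s < (A + u).rank := by
  have hr : 1 ≤ u.rank := rank_pos_of_ne_zero hu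
  obtain ⟨A, hA, hAu⟩ := exists_rank_increase u (s + 1 - u.rank)
  exact ⟨A, by omega, by omega⟩

end Aux

/-- **Example 3.7.** For positive integers `m, n` and `s < min{m, n}`, let
`M_s ⊆ 𝔸^{m×n}` be the (determinantal) variety of `m×n` matrices of rank at most `s` over
the algebraic closure of `𝔽_q`. Then for every nonzero matrix `u ∈ 𝔽_q^{m×n}` we have
`M_s ≠ M_s⁽ᵘ⁾ = {A + u : A ∈ M_s}`; that is, `M_s` is `𝔽_q^{m×n}`-shift-free.
Equivalently, for every nonzero `u ∈ 𝔽_q^{m×n}` there is a matrix `A` over `𝔽_q` with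
`rank A ≤ s` and `rank (A + u) > s`. -/
theorem stmt12 {F : Type*} [Field F] [Finite F] {m n s : ℕ}
    (hm : 0 < m) (hn : 0 < n) (hs : s < min m n)
    (Ms : Set (Matrix (Fin m) (Fin n) (AlgebraicClosure F)))
    (hMs : Ms = {A | A.rank ≤ s}) :
    ∀ u : Matrix (Fin m) (Fin n) F, u ≠ 0 →
      (Ms ≠ (fun A => A + u.map (algebraMap F (AlgebraicClosure F))) '' Ms) ∧
      ∃ A : Matrix (Fin m) (Fin n) F, A.rank ≤ s ∧ s < (A + u).rank := by
  intro u hu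
  constructor
  · -- shift-freeness over the algebraic closure
    set φ := algebraMap F (AlgebraicClosure F)
    have hu' : u.map φ ≠ 0 := by
      intro h0
      apply hu
      ext i j
      have := congrFun (congrFun h0 i) j
      simp only [Matrix.map_apply, Matrix.zero_apply] at this ⊢
      exact (algebraMap F (AlgebraicClosure F)).injective (by simpa using this)
    obtain ⟨A', hA', hA'u⟩ := exists_shift_witness hs (u.map φ) hu'
    intro hEq
    have hmem : A' ∈ Ms := by rw [hMs]; exact hA'
    have hmem2 : A' + u.map φ ∈ (fun A => A + u.map φ) '' Ms := ⟨A', hmem, rfl⟩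
    rw [← hEq, hMs] at hmem2
    exact absurd hmem2 (by simpa using not_le.mpr hA'u)
  · exact exists_shift_witness hs u hu
end

section
/- Let q be a power of a prime p with p > d, and let f ∈ 𝔽_q[x₁, …, x_n] \ {0} have total degree d. Then for u = (u₁, …, u_n) ∈ 𝔽_qⁿ \ {0}, f is shift-invariant under u (i.e., f(x) = f(x − u) identically) if and only if Σ_{1 ≤ i ≤ n} u_i · (∂f/∂x_i) = 0 as a polynomial. -/
open MvPolynomial

noncomputable def stmtPhi {F : Type*} [CommRing F] {n : ℕ} (u : Fin n → F) :
    MvPolynomial (Fin n) F →ₐ[F] Polynomial (MvPolynomial (Fin n) F) :=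
  MvPolynomial.aeval (fun i => Polynomial.C (X i) - Polynomial.C (C (u i)) * Polynomial.X)

section aux
variable {F : Type*} [CommRing F] {n : ℕ} (u : Fin n → F)

lemma stmtPhi_X (i : Fin n) :
    stmtPhi u (X i) = Polynomial.C (X i) - Polynomial.C (C (u i)) * Polynomial.X := by
  simp [stmtPhi]

lemma stmtPhi_C (a : F) : stmtPhi u (C a) = Polynomial.C (C a) := by
  simp [stmtPhi, MvPolynomial.algebraMap_eq, Polynomial.algebraMap_apply]

lemma stmtD_X (j : Fin n) :
    ∑ i : Fin n, u i • pderiv i (X j : MvPolynomial (Fin n) F) = C (u j) := by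
  classical
  rw [Finset.sum_eq_single j (fun i _ h => by simp [pderiv_X_of_ne (Ne.symm h)]) (by simp)]
  simp [MvPolynomial.smul_eq_C_mul]

lemma stmtD_mul (f g : MvPolynomial (Fin n) F) :
    ∑ i : Fin n, u i • pderiv i (f * g) =
      f * (∑ i : Fin n, u i • pderiv i g) + (∑ i : Fin n, u i • pderiv i f) * g := by
  simp only [pderiv_mul, smul_add, Finset.sum_add_distrib, Finset.mul_sum, Finset.sum_mul,
    mul_smul_comm, smul_mul_assoc]
  ring

lemma stmtPhi_deriv (f : MvPolynomial (Fin n) F) :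
    Polynomial.derivative (stmtPhi u f) = - stmtPhi u (∑ i : Fin n, u i • pderiv i f) := by
  induction f using MvPolynomial.induction_on with
  | C a => simp [stmtPhi_C]
  | add f g hf hg =>
      simp only [map_add, smul_add, Finset.sum_add_distrib, Polynomial.derivative_add, hf, hg]; ring
  | mul_X f j hf =>
      rw [map_mul, Polynomial.derivative_mul, hf, stmtD_mul, stmtD_X, map_add, map_mul, map_mul,
        stmtPhi_C, stmtPhi_X]
      simp only [Polynomial.derivative_sub, Polynomial.derivative_C, Polynomial.derivative_C_mul, Polynomial.derivative_X, mul_one, zero_sub]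
      ring

lemma stmtPhi_eval (c : F) (f : MvPolynomial (Fin n) F) :
    Polynomial.eval (C c) (stmtPhi u f) = bind₁ (fun i => X i - C (c * u i)) f := by
  have h : (Polynomial.evalRingHom (C c : MvPolynomial (Fin n) F)).comp
      (stmtPhi u).toRingHom = (bind₁ (fun i : Fin n => X i - C (c * u i))).toRingHom := by
    apply MvPolynomial.ringHom_ext
    · intro a
      simp [stmtPhi_C]
    · intro i
      simp only [RingHom.coe_comp, Function.comp_apply, AlgHom.toRingHom_eq_coe,
        RingHom.coe_coe, stmtPhi_X, bind₁_X_right, Polynomial.coe_evalRingHom,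
        Polynomial.eval_sub, Polynomial.eval_mul, Polynomial.eval_C, Polynomial.eval_X, map_mul]
      ring
  exact RingHom.congr_fun h f

lemma stmt_shift_shift (a b : Fin n → F) (f : MvPolynomial (Fin n) F) :
    bind₁ (fun i => X i - C (b i)) (bind₁ (fun i => X i - C (a i)) f) =
      bind₁ (fun i : Fin n => X i - C (a i + b i)) f := by
  rw [bind₁_bind₁]
  congr 1
  apply MvPolynomial.algHom_ext
  intro i
  simp only [bind₁_X_right, map_sub, bind₁_C_right, map_add]
  ring

lemma stmtPhi_natDegree (f : MvPolynomial (Fin n) F) :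
    (stmtPhi u f).natDegree ≤ f.totalDegree := by
  conv_lhs => rw [← support_sum_monomial_coeff f]
  rw [map_sum]
  apply Polynomial.natDegree_sum_le_of_forall_le
  intro m hm
  refine le_trans ?_ (le_totalDegree hm)
  rw [stmtPhi, aeval_monomial]
  refine le_trans (Polynomial.natDegree_mul_le) ?_
  have h0 : (algebraMap F (Polynomial (MvPolynomial (Fin n) F)) (coeff m f)).natDegree = 0 := by
    rw [Polynomial.algebraMap_apply]; exact Polynomial.natDegree_C _
  rw [h0, zero_add, Finsupp.prod]
  refine le_trans (Polynomial.natDegree_prod_le _ _) ?_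
  rw [Finsupp.sum]
  apply Finset.sum_le_sum
  intro i _
  refine le_trans (Polynomial.natDegree_pow_le) ?_
  have h1 : (Polynomial.C (X i : MvPolynomial (Fin n) F) -
      Polynomial.C (C (u i)) * Polynomial.X).natDegree ≤ 1 := by
    refine le_trans (Polynomial.natDegree_sub_le _ _) ?_
    simp only [Polynomial.natDegree_C, max_le_iff]
    exact ⟨Nat.zero_le _, le_trans (Polynomial.natDegree_mul_le) (by simp [Polynomial.natDegree_X_le])⟩
  calc m i * _ ≤ m i * 1 := Nat.mul_le_mul_left _ h1
    _ = m i := Nat.mul_one _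

end aux

/-- **Proposition 6.3.** Let `q` be a power of a prime `p` with `p > d`, and let
`f ∈ 𝔽_q[x₁, …, x_n] \ {0}` have total degree `d`. Then for `u ∈ 𝔽_qⁿ \ {0}`, `f` is
shift-invariant under `u` (i.e. `f(x) = f(x − u)` identically) if and only if
`∑_{1≤i≤n} uᵢ·(∂f/∂xᵢ) = 0` as a polynomial. -/
theorem stmt15 {p : ℕ} [Fact p.Prime] {F : Type*} [Field F] [Finite F] [CharP F p]
    {n d : ℕ} (f : MvPolynomial (Fin n) F) (hf : f ≠ 0)
    (hdeg : f.totalDegree = d) (hpd : d < p)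
    (u : Fin n → F) (hu : u ≠ 0) :
    f = MvPolynomial.bind₁ (fun i => MvPolynomial.X i - MvPolynomial.C (u i)) f ↔
      ∑ i : Fin n, u i • MvPolynomial.pderiv i f = 0 := by
  set g : Polynomial (MvPolynomial (Fin n) F) := stmtPhi u f with hg
  have hdg : g.natDegree ≤ d := by rw [hg, ← hdeg]; exact stmtPhi_natDegree u f
  have heval0 : g.eval 0 = f := by
    have := stmtPhi_eval u 0 f
    simpa using this
  have hevalσ : g.eval 1 = bind₁ (fun i => X i - C (u i)) f := by
    have := stmtPhi_eval u 1 f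
    simpa using this
  constructor
  · intro h
    have key : ∀ k : ℕ, g.eval ((k : MvPolynomial (Fin n) F)) = f := by
      intro k
      induction k with
      | zero => simpa using heval0
      | succ k ih =>
        have hc : ((k : ℕ) : MvPolynomial (Fin n) F) = C ((k : ℕ) : F) := (map_natCast (C : F →+* MvPolynomial (Fin n) F) k).symm
        have hc' : (((k+1 : ℕ)) : MvPolynomial (Fin n) F) = C (((k+1 : ℕ)) : F) :=
          (map_natCast (C : F →+* MvPolynomial (Fin n) F) (k+1)).symm
        rw [hc', hg, stmtPhi_eval,
          show (fun i : Fin n => X i - C ((((k+1:ℕ)) : F) * u i)) =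
            fun i : Fin n => X i - C ((((k:ℕ)) : F) * u i + u i) from by
              funext i; push_cast; ring_nf,
          ← stmt_shift_shift (fun i => ((k:ℕ):F) * u i) u f, ← stmtPhi_eval, ← hg, ← hc, ih]
        exact h.symm
    have hzero : g - Polynomial.C f = 0 := by
      apply Polynomial.eq_zero_of_natDegree_lt_card_of_eval_eq_zero _
        (f := fun k : Fin p => ((k : ℕ) : MvPolynomial (Fin n) F))
      · intro a b hab
        exact Fin.ext (CharP.natCast_injOn_Iio (MvPolynomial (Fin n) F) p a.isLt b.isLt hab)
      · intro k
        simp [key]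
      · refine lt_of_le_of_lt (le_trans (Polynomial.natDegree_sub_le _ _) ?_) (by simpa using hpd)
        simp [hdg]
    have hgC : g = Polynomial.C f := by linear_combination hzero
    have hd0 : Polynomial.derivative g = 0 := by rw [hgC, Polynomial.derivative_C]
    have hder := stmtPhi_deriv u f
    rw [hd0] at hder
    have hph : stmtPhi u (∑ i : Fin n, u i • pderiv i f) = 0 := neg_eq_zero.mp hder.symm
    have := stmtPhi_eval u 0 (∑ i : Fin n, u i • pderiv i f)
    rw [hph] at this
    simpa using this.symm
  · intro h
    have hd0 : Polynomial.derivative g = 0 := by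
      rw [hg, stmtPhi_deriv, h, map_zero, neg_zero]
    have hco : ∀ m : ℕ, 1 ≤ m → g.coeff m = 0 := by
      intro m hm
      by_cases hlt : g.natDegree < m
      · exact Polynomial.coeff_eq_zero_of_natDegree_lt hlt
      · push_neg at hlt
        have h1 : g.coeff ((m-1) + 1) * (((m-1) : ℕ) + 1 : MvPolynomial (Fin n) F) = 0 := by
          rw [← Polynomial.coeff_derivative, hd0, Polynomial.coeff_zero]
        rw [Nat.sub_add_cancel hm] at h1
        have hm0 : ((((m-1) : ℕ) + 1 : MvPolynomial (Fin n) F)) ≠ 0 := by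
          have hne : ¬ (p ∣ m) := by
            intro hdvd
            have := Nat.le_of_dvd (by omega) hdvd
            omega
          have hmn : (((m - 1 + 1 : ℕ)) : MvPolynomial (Fin n) F) ≠ 0 := by
            rw [Nat.sub_add_cancel hm]
            exact fun hc => hne ((CharP.cast_eq_zero_iff (MvPolynomial (Fin n) F) p m).mp hc)
          push_cast at hmn
          exact hmn
        rcases mul_eq_zero.mp h1 with h2 | h2
        · exact h2
        · exact absurd h2 hm0
    have hgC : g = Polynomial.C (g.coeff 0) := by
      ext m
      cases m with
      | zero => simp
      | succ m => simp [hco (m+1) (by omega), Polynomial.coeff_C]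
    have e0 : f = g.coeff 0 := by
      conv_lhs => rw [← heval0, hgC]
      simp
    have e1 : (bind₁ fun i => X i - C (u i)) f = g.coeff 0 := by
      conv_lhs => rw [← hevalσ, hgC]
      simp
    exact e0.trans e1.symm
end
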